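/- arXiv:1705.02816 — 2 statements merged into one kernel-verified Lean document; each statement's English description precedes it below -/
import Mathlib

section
/- (Dependency-testing bound, block-memoryless form) Let P be a probability measure on X × Y with marginal P_Y, and suppose codewords X_1,…,X_M are drawn i.i.d. from P_X. With a decoder that outputs the first message j whose information density i(x_j; y) = log(dP_{Y|X=x_j}/dP_Y)(y) exceeds log((M−1)/2), the average error probability is at most E[exp(−(i(X;Y) − log((M−1)/2))⁺)], where (a)⁺ = max{0, a} and (X,Y) ~ P. -/
/-!
Message `j` is decoded wrongly only if its own codeword fails the test `τ < i (c j) y` or some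
earlier codeword `c k`, `k < j`, passes it. As `c k` is independent of `(c j, y)`, the union bound
gives the error probability `P[i ≤ τ] + j · (P_X ⊗ P_Y)[τ < i]`, and averaging over `j` replaces
`j` by `(M - 1) / 2 = exp τ`. Since `P_X ⊗ P_Y` has density `exp (-i)` with respect to `P`, the sum
`P[i ≤ τ] + exp τ · (P_X ⊗ P_Y)[τ < i]` equals `E[min 1 (exp (τ - i))] = E[exp (-(i - τ)⁺)]`.
-/

open MeasureTheory ProbabilityTheory Finset
open scoped ENNReal

theorem Finset.exists_lt_of_min_filter_ne {ι : Type*} [LinearOrder ι] {s : Finset ι}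
    {p : ι → Prop} [DecidablePred p] {j : ι} (hj : j ∈ s) (hpj : p j)
    (hne : (s.filter p).min ≠ j) : ∃ k ∈ s, k < j ∧ p k := by
  have hjp : j ∈ s.filter p := mem_filter.mpr ⟨hj, hpj⟩
  obtain ⟨k, hk⟩ := Finset.min_of_mem hjp
  obtain ⟨hks, hpk⟩ := mem_filter.mp (Finset.mem_of_min hk)
  exact ⟨k, hks, (Finset.min_le_of_eq hjp hk).lt_of_ne (by rintro rfl; exact hne hk), hpk⟩

theorem Finset.ite_min_filter_le_add_sum_Iio {ι : Type*} [LinearOrder ι] [Fintype ι]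
    [LocallyFiniteOrderBot ι] (p : ι → Prop) [DecidablePred p] (j : ι) :
    (if (univ.filter p).min = j then 0 else 1 : ℝ≥0∞) ≤
      (if p j then 0 else 1) + ∑ k ∈ Iio j, if p k then 1 else 0 := by
  by_cases hmin : (univ.filter p).min = j
  · simp [hmin]
  by_cases hpj : p j
  · obtain ⟨k, -, hkj, hpk⟩ := Finset.exists_lt_of_min_filter_ne (mem_univ j) hpj hmin
    calc (if (univ.filter p).min = j then 0 else 1 : ℝ≥0∞) = if p k then 1 else 0 := by
          simp [hmin, hpk]
      _ ≤ ∑ k ∈ Iio j, if p k then 1 else 0 :=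
          single_le_sum (f := fun k => if p k then (1 : ℝ≥0∞) else 0) (fun _ _ => zero_le)
            (mem_Iio.mpr hkj)
      _ ≤ _ := le_add_self
  · simp [hmin, hpj]

theorem measurePreserving_eval_pair {𝒳 : Type*} [MeasurableSpace 𝒳] (μ : Measure 𝒳)
    [IsProbabilityMeasure μ] {ι : Type*} [Fintype ι] {k j : ι} (hkj : k ≠ j) :
    MeasurePreserving (fun c : ι → 𝒳 => (c k, c j)) (Measure.pi fun _ => μ) (μ.prod μ) := by
  refine ⟨(measurable_pi_apply k).prodMk (measurable_pi_apply j), ?_⟩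
  have hind : IndepFun (fun c : ι → 𝒳 => c k) (fun c => c j) (Measure.pi fun _ => μ) :=
    (iIndepFun_pi (X := fun _ => id) fun _ => aemeasurable_id).indepFun hkj
  rw [hind.map_prod_eq_prod_map_map (measurable_pi_apply k).aemeasurable
    (measurable_pi_apply j).aemeasurable, (measurePreserving_eval _ k).map_eq,
    (measurePreserving_eval _ j).map_eq]

theorem MeasureTheory.Measure.compProd_eq_withDensity_prod {α β : Type*} [MeasurableSpace α]
    [MeasurableSpace β] {μ : Measure α} {ν : Measure β} [SFinite μ] [SFinite ν] {κ : Kernel α β}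
    [IsSFiniteKernel κ] {ρ : α → β → ℝ≥0∞} (hρ : Measurable (Function.uncurry ρ))
    (hκ : ∀ a, κ a = ν.withDensity (ρ a)) :
    μ ⊗ₘ κ = (μ.prod ν).withDensity (Function.uncurry ρ) := by
  obtain rfl : κ = (Kernel.const α ν).withDensity ρ := by
    ext1 a
    rw [Kernel.withDensity_apply _ hρ, hκ, Kernel.const_apply]
  rw [Measure.compProd_withDensity hρ, Measure.compProd_const]
  rfl

section RandomCoding

variable {𝒳 𝒴 : Type*} [MeasurableSpace 𝒳] [MeasurableSpace 𝒴] {PX : Measure 𝒳}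
  [IsProbabilityMeasure PX] {K : Kernel 𝒳 𝒴} [IsSFiniteKernel K] {M : ℕ} {S : Set (𝒳 × 𝒴)}

theorem measurable_kernel_snd_prodMk_fst (hS : MeasurableSet S) :
    Measurable fun p : 𝒳 × 𝒳 => K p.2 (Prod.mk p.1 ⁻¹' S) :=
  Kernel.measurable_kernel_prodMk_left (κ := Kernel.prodMkLeft 𝒳 K) (t := {q | (q.1.1, q.2) ∈ S})
    (measurable_fst.fst.prodMk measurable_snd hS)

theorem lintegral_pi_kernel_eval_slice (hS : MeasurableSet S) (j : Fin M) :
    ∫⁻ c, K (c j) (Prod.mk (c j) ⁻¹' S) ∂(Measure.pi fun _ => PX) = (PX ⊗ₘ K) S :=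
  ((measurePreserving_eval (fun _ : Fin M => PX) j).lintegral_comp
    (f := fun x => K x (Prod.mk x ⁻¹' S)) (Kernel.measurable_kernel_prodMk_left hS)).trans
    (Measure.compProd_apply hS).symm

theorem lintegral_pi_kernel_eval_slice_of_ne (hS : MeasurableSet S) {k j : Fin M} (hkj : k ≠ j) :
    ∫⁻ c, K (c j) (Prod.mk (c k) ⁻¹' S) ∂(Measure.pi fun _ => PX) = (PX.prod (PX.bind K)) S := by
  rw [(measurePreserving_eval_pair PX hkj).lintegral_comp
      (f := fun p => K p.2 (Prod.mk p.1 ⁻¹' S)) (measurable_kernel_snd_prodMk_fst hS),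
    lintegral_prod _ (measurable_kernel_snd_prodMk_fst hS).aemeasurable, Measure.prod_apply hS]
  congr with x'
  rw [Measure.bind_apply (measurable_prodMk_left hS) K.measurable.aemeasurable]

theorem lintegral_pi_ite_min_filter_le [DecidablePred (· ∈ S)] (hS : MeasurableSet S) (j : Fin M) :
    ∫⁻ c, ∫⁻ y, (if (univ.filter fun k => (c k, y) ∈ S).min = (j : WithTop (Fin M)) then 0 else 1)
        ∂K (c j) ∂(Measure.pi fun _ => PX) ≤
      (PX ⊗ₘ K) Sᶜ + (j : ℕ) * (PX.prod (PX.bind K)) S := by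
  have hmeas_compl : Measurable fun c : Fin M → 𝒳 => K (c j) (Prod.mk (c j) ⁻¹' Sᶜ) :=
    (Kernel.measurable_kernel_prodMk_left hS.compl).comp (measurable_pi_apply j)
  have hmeas (k : Fin M) : Measurable fun c : Fin M → 𝒳 => K (c j) (Prod.mk (c k) ⁻¹' S) :=
    (measurable_kernel_snd_prodMk_fst hS).comp (f := fun c : Fin M → 𝒳 => (c k, c j))
      ((measurable_pi_apply k).prodMk (measurable_pi_apply j))
  calc _ ≤ ∫⁻ c, (K (c j) (Prod.mk (c j) ⁻¹' Sᶜ) + ∑ k ∈ Iio j, K (c j) (Prod.mk (c k) ⁻¹' S))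
          ∂(Measure.pi fun _ => PX) := by
        refine lintegral_mono fun c => ?_
        calc _ ≤ ∫⁻ y, ((Prod.mk (c j) ⁻¹' Sᶜ).indicator 1 y
              + ∑ k ∈ Iio j, (Prod.mk (c k) ⁻¹' S).indicator 1 y) ∂K (c j) :=
              lintegral_mono fun y => by
                convert Finset.ite_min_filter_le_add_sum_Iio (fun k => (c k, y) ∈ S) j using 2
                all_goals classical simp [Set.indicator_apply]
          _ = _ := by
              rw [lintegral_add_left (measurable_one.indicator (measurable_prodMk_left hS.compl)),
                lintegral_finsetSum _ fun k _ =>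
                  measurable_one.indicator (measurable_prodMk_left hS)]
              simp only [lintegral_indicator_one (measurable_prodMk_left hS.compl),
                lintegral_indicator_one (measurable_prodMk_left hS)]
    _ = (PX ⊗ₘ K) Sᶜ + ∑ _k ∈ Iio j, (PX.prod (PX.bind K)) S := by
        rw [lintegral_add_left hmeas_compl,
          lintegral_finsetSum _ fun k _ => hmeas k, lintegral_pi_kernel_eval_slice hS.compl,
          sum_congr rfl fun k hk => lintegral_pi_kernel_eval_slice_of_ne hS (mem_Iio.mp hk).ne]
    _ = _ := by rw [sum_const, Fin.card_Iio, nsmul_eq_mul]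

end RandomCoding

theorem ENNReal.natCast_inv_mul_sum_fin_add_mul {M : ℕ} (hM : M ≠ 0) (a b : ℝ≥0∞) :
    (M : ℝ≥0∞)⁻¹ * ∑ j : Fin M, (a + (j : ℕ) * b) = a + ENNReal.ofReal ((M - 1) / 2) * b := by
  have hgauss : ∑ j : Fin M, ((j : ℕ) : ℝ≥0∞) = M * ENNReal.ofReal ((M - 1) / 2) := by
    have hreal : ((∑ j ∈ range M, j : ℕ) : ℝ) = M * ((M - 1) / 2) := by
      have h := congrArg (Nat.cast : ℕ → ℝ) (sum_range_id_mul_two M)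
      rcases Nat.exists_eq_succ_of_ne_zero hM with ⟨n, rfl⟩
      push_cast at h ⊢
      linarith
    rw [← Nat.cast_sum, Fin.sum_univ_eq_sum_range (fun j => j), ← ENNReal.ofReal_natCast,
      hreal, ENNReal.ofReal_mul (Nat.cast_nonneg M), ENNReal.ofReal_natCast]
  have hM' : (M : ℝ≥0∞) ≠ 0 := by exact_mod_cast hM
  rw [sum_add_distrib, ← sum_mul, hgauss, sum_const, card_univ, Fintype.card_fin, nsmul_eq_mul,
    mul_assoc, ← mul_add, ← mul_assoc, ENNReal.inv_mul_cancel hM' (ENNReal.natCast_ne_top M),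
    one_mul]

open Real in
theorem ENNReal.ofReal_exp_mul_ofReal_exp_neg_max (a τ : ℝ) :
    ENNReal.ofReal (exp a) * ENNReal.ofReal (exp (-(max 0 (a - τ)))) =
      if τ < a then ENNReal.ofReal (exp τ) else ENNReal.ofReal (exp a) := by
  rw [← ENNReal.ofReal_mul (exp_pos a).le, ← exp_add]
  split_ifs with h
  · rw [max_eq_right (by linarith)]
    ring_nf
  · rw [max_eq_left (by linarith), neg_zero, add_zero]

open Real in
theorem lintegral_compProd_ofReal_exp_neg_max_eq {𝒳 𝒴 : Type*} [MeasurableSpace 𝒳]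
    [MeasurableSpace 𝒴] {PX : Measure 𝒳} [SFinite PX] {PY : Measure 𝒴} [SFinite PY]
    {K : Kernel 𝒳 𝒴} [IsSFiniteKernel K] {i : 𝒳 → 𝒴 → ℝ} (him : Measurable (Function.uncurry i))
    (hdens : ∀ x, K x = PY.withDensity fun y => ENNReal.ofReal (exp (i x y))) (τ : ℝ) :
    ∫⁻ p, ENNReal.ofReal (exp (-(max 0 (i p.1 p.2 - τ)))) ∂(PX ⊗ₘ K) =
      (PX ⊗ₘ K) {p | τ < i p.1 p.2}ᶜ +
        ENNReal.ofReal (exp τ) * (PX.prod PY) {p | τ < i p.1 p.2} := by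
  set S := {p : 𝒳 × 𝒴 | τ < i p.1 p.2}
  have hS : MeasurableSet S := measurableSet_lt measurable_const him
  have hρ : Measurable (Function.uncurry fun x y => ENNReal.ofReal (exp (i x y))) := by
    fun_prop
  have hexp : Measurable fun p : 𝒳 × 𝒴 => ENNReal.ofReal (exp (-(max 0 (i p.1 p.2 - τ)))) := by
    fun_prop
  rw [Measure.compProd_eq_withDensity_prod hρ hdens,
    lintegral_withDensity_eq_lintegral_mul _ hρ hexp,
    withDensity_apply _ hS.compl, ← lintegral_indicator hS.compl, ← lintegral_indicator_one hS,
    ← lintegral_const_mul _ (measurable_one.indicator hS),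
    ← lintegral_add_left (hρ.indicator hS.compl)]
  congr with p
  rw [Pi.mul_apply, Function.uncurry_def, ENNReal.ofReal_exp_mul_ofReal_exp_neg_max]
  by_cases h : τ < i p.1 p.2 <;> simp [S, h]

/-- Dependency-testing bound, block-memoryless form.
Codewords `c 0, …, c (M-1)` are drawn i.i.d. from `P_X` (their joint law is the product
measure `P_X^{⊗ M}`).  The decoder outputs the first (smallest-index) message `j` whose
information density `i(c j, y) = log (dP_{Y|X=c j}/dP_Y)(y)` exceeds `τ = log((M-1)/2)`
(`Finset.min` of the set of such indices, an element of `WithBot (Fin M)`).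
The average error probability is at most `E[exp(-(i(X;Y) - log((M-1)/2))⁺)]`
where `(X, Y) ~ P_X ⊗ P_{Y|X}`. -/
theorem dependency_testing_bound
    {𝒳 𝒴 : Type*} [MeasurableSpace 𝒳] [MeasurableSpace 𝒴]
    (PX : Measure 𝒳) [IsProbabilityMeasure PX]
    (K : Kernel 𝒳 𝒴) [IsMarkovKernel K]
    (PY : Measure 𝒴) (hPY : PY = PX.bind (fun x => K x))
    (i : 𝒳 → 𝒴 → ℝ) (him : Measurable (Function.uncurry i))
    (hdens : ∀ x, K x = PY.withDensity fun y => ENNReal.ofReal (Real.exp (i x y)))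
    (M : ℕ) (hM : 2 ≤ M)
    (τ : ℝ) (hτ : τ = Real.log ((M - 1 : ℝ) / 2))
    (g : (Fin M → 𝒳) → 𝒴 → WithBot (Fin M))
    (hg : ∀ c y, g c y = (Finset.univ.filter fun j : Fin M => τ < i (c j) y).min) :
    (M : ENNReal)⁻¹ * ∑ j : Fin M,
        ∫⁻ c, (∫⁻ y, (if g c y = (j : WithBot (Fin M)) then 0 else 1) ∂(K (c j)))
          ∂(Measure.pi fun _ : Fin M => PX) ≤
      ∫⁻ x, (∫⁻ y, ENNReal.ofReal (Real.exp (-(max 0 (i x y - τ)))) ∂(K x)) ∂PX := by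
  set S := {p : 𝒳 × 𝒴 | τ < i p.1 p.2}
  have hS : MeasurableSet S := measurableSet_lt measurable_const him
  have hexpτ : Real.exp τ = (M - 1) / 2 := by
    rw [hτ, Real.exp_log]
    have : (2 : ℝ) ≤ M := by exact_mod_cast hM
    linarith
  have : IsProbabilityMeasure PY := hPY ▸ inferInstance
  calc _ ≤ (M : ℝ≥0∞)⁻¹ * ∑ j : Fin M, ((PX ⊗ₘ K) Sᶜ + (j : ℕ) * (PX.prod PY) S) := by
        gcongr with j
        -- `Finset.min` lands in `WithTop`, which unfolds to `Option` just like `WithBot`.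
        obtain rfl : g = fun c y => (univ.filter fun k : Fin M => τ < i (c k) y).min := funext₂ hg
        rw [hPY]
        exact lintegral_pi_ite_min_filter_le hS j
    _ = (PX ⊗ₘ K) Sᶜ + ENNReal.ofReal (Real.exp τ) * (PX.prod PY) S := by
        rw [ENNReal.natCast_inv_mul_sum_fin_add_mul (by omega), hexpτ]
    _ = ∫⁻ p, ENNReal.ofReal (Real.exp (-(max 0 (i p.1 p.2 - τ)))) ∂(PX ⊗ₘ K) :=
        (lintegral_compProd_ofReal_exp_neg_max_eq him hdens τ).symm
    _ = _ := Measure.lintegral_compProd (by fun_prop)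
end

section
/- (Verdú–Han-type converse from the min-max converse) For any random variable S (the information density under the channel law) and any ε ∈ (0,1), any (M, ε)-code satisfies, for every λ ≥ 0: log M ≤ λ − log( (P[S ≤ λ] − ε)⁺ ), where the right-hand side is interpreted as +∞ if P[S ≤ λ] ≤ ε. Formally: if β_{1−ε} denotes the Neyman–Pearson function between the channel law and an auxiliary law under which the LLR equals S, then β_{1−ε} ≥ e^{−λ}(P[S ≤ λ] − ε) for all λ ≥ 0. -/
open MeasureTheory Set

/-- Neyman–Pearson beta function: `β_α(P,Q)` is the infimum of `Q(E)` over measurable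
events `E` with `P(E) ≥ α`. -/
noncomputable def npBeta {Ω : Type*} [MeasurableSpace Ω] (P Q : Measure Ω) (α : ℝ) : ENNReal :=
  ⨅ (E : Set Ω) (_ : MeasurableSet E) (_ : ENNReal.ofReal α ≤ P E), Q E

/-! On the event `{S ≤ λ}` the density `dP/dQ` is at most `e^λ`, so every test `E` satisfies
`P(E ∩ {S ≤ λ}) ≤ e^λ Q(E)`. If moreover `P(E) ≥ 1 - ε`, the rest of `{S ≤ λ}` lies in `Eᶜ`, of
`P`-mass at most `ε`. Together, `P[S ≤ λ] - ε ≤ e^λ Q(E)`. -/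

theorem ENNReal.le_ofReal_exp_of_log_toReal_le {a : ENNReal} {c : ℝ} (ha : a ≠ ⊤)
    (h : Real.log a.toReal ≤ c) : a ≤ ENNReal.ofReal (Real.exp c) := by
  rcases eq_zero_or_pos a with rfl | ha₀
  · exact zero_le
  rw [ENNReal.le_ofReal_iff_toReal_le ha (Real.exp_pos c).le]
  exact (Real.log_le_iff_le_exp (ENNReal.toReal_pos ha₀.ne' ha)).mp h

namespace MeasureTheory

variable {α : Type*} [MeasurableSpace α] {μ ν : Measure α}

theorem Measure.le_mul_of_ae_rnDeriv_le [μ.HaveLebesgueDecomposition ν] [SFinite ν]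
    (hμν : μ ≪ ν) {s : Set α} {c : ENNReal} (h : ∀ᵐ x ∂ν, x ∈ s → μ.rnDeriv ν x ≤ c) :
    μ s ≤ c * ν s :=
  calc μ s = ∫⁻ x in s, μ.rnDeriv ν x ∂ν := (Measure.setLIntegral_rnDeriv hμν s).symm
    _ ≤ ∫⁻ _ in s, c ∂ν := setLIntegral_mono_ae aemeasurable_const h
    _ = c * ν s := setLIntegral_const s c

theorem Measure.measureReal_inter_llr_le [IsFiniteMeasure μ] [IsFiniteMeasure ν] (hμν : μ ≪ ν)
    (s : Set α) (c : ℝ) :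
    μ.real (s ∩ {x | Real.log (μ.rnDeriv ν x).toReal ≤ c}) ≤ Real.exp c * ν.real s := by
  have h_density : ∀ᵐ x ∂ν, x ∈ s ∩ {x | Real.log (μ.rnDeriv ν x).toReal ≤ c} →
      μ.rnDeriv ν x ≤ ENNReal.ofReal (Real.exp c) := by
    filter_upwards [Measure.rnDeriv_lt_top μ ν] with x hx_top hx
    exact ENNReal.le_ofReal_exp_of_log_toReal_le hx_top.ne hx.2
  calc μ.real (s ∩ _) ≤ (ENNReal.ofReal (Real.exp c) * ν (s ∩ _)).toReal :=
        ENNReal.toReal_mono (by finiteness) (Measure.le_mul_of_ae_rnDeriv_le hμν h_density)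
    _ ≤ Real.exp c * ν.real s := by
        rw [ENNReal.toReal_mul, ENNReal.toReal_ofReal (Real.exp_pos c).le]
        gcongr
        exact measureReal_mono inter_subset_left

theorem measureReal_compl_le_of_ofReal_sub_le [IsProbabilityMeasure μ] {s : Set α} (hs : MeasurableSet s) {ε : ℝ}
    (h : ENNReal.ofReal (1 - ε) ≤ μ s) : μ.real sᶜ ≤ ε := by
  rw [probReal_compl_eq_one_sub hs]
  have h_real : 1 - ε ≤ μ.real s := (ENNReal.ofReal_le_iff_le_toReal (measure_ne_top μ s)).mp h
  linarith

end MeasureTheory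

theorem verdu_han_converse_general {Ω : Type*} [MeasurableSpace Ω]
    (P Q : Measure Ω) [IsProbabilityMeasure P] [IsProbabilityMeasure Q]
    (hPQ : P ≪ Q)
    (S : Ω → ℝ) (hS : S = fun ω => Real.log (P.rnDeriv Q ω).toReal)
    (ε : ℝ) :
    ∀ lam : ℝ, 0 ≤ lam →
      ENNReal.ofReal (Real.exp (-lam) * ((P {ω | S ω ≤ lam}).toReal - ε)) ≤
        npBeta P Q (1 - ε) := by
  intro lam _
  refine le_iInf fun E => le_iInf fun hE => le_iInf fun hPE => ?_
  set A := {ω | S ω ≤ lam}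
  have h_llr : P.real (E ∩ A) ≤ Real.exp lam * Q.real E := by
    subst hS
    exact Measure.measureReal_inter_llr_le hPQ E lam
  have h_split : P.real A ≤ P.real (E ∩ A) + ε :=
    calc P.real A = P.real (A ∩ E) + P.real (A \ E) := (measureReal_inter_add_sdiff hE).symm
      _ ≤ P.real (E ∩ A) + ε := by
        rw [inter_comm]
        gcongr
        exact (measureReal_mono fun _ hω => hω.2).trans
          (measureReal_compl_le_of_ofReal_sub_le hE hPE)
  rw [← ENNReal.ofReal_toReal (measure_ne_top Q E)]
  refine ENNReal.ofReal_le_ofReal ?_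
  rw [Real.exp_neg, inv_mul_le_iff₀ (Real.exp_pos lam)]
  change P.real A - ε ≤ Real.exp lam * Q.real E
  linarith

/-- Verdú–Han-type converse from the min-max converse: if `S = log (dP/dQ)`
is the log-likelihood ratio between the channel law `P` and the auxiliary law `Q`, then for
every `λ ≥ 0`, `β_{1-ε}(P,Q) ≥ e^{-λ} (P[S ≤ λ] - ε)`. -/
theorem verdu_han_converse {Ω : Type*} [MeasurableSpace Ω]
    (P Q : Measure Ω) [IsProbabilityMeasure P] [IsProbabilityMeasure Q]
    (hPQ : P ≪ Q) (hQP : Q ≪ P)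
    (S : Ω → ℝ) (hS : S = fun ω => Real.log (P.rnDeriv Q ω).toReal)
    (ε : ℝ) (hε : ε ∈ Ioo (0 : ℝ) 1) :
    ∀ lam : ℝ, 0 ≤ lam →
      ENNReal.ofReal (Real.exp (-lam) * ((P {ω | S ω ≤ lam}).toReal - ε)) ≤
        npBeta P Q (1 - ε) :=
  verdu_han_converse_general P Q hPQ S hS ε
end
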